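/- arXiv:2205.10880 — 6 statements merged into one kernel-verified Lean document; each statement's English description precedes it below -/
import Mathlib

section
/- If H is a dag with m edges that is not a rooted star (has at least two edges and no isolated vertices), then s(H) ≤ m − 1. -/
open scoped Classical

/-- A permutation `π` of the vertices respects a coloring `C` if each color
class is consecutive in the order induced by `π`. -/
def Respects {h : ℕ} (C : Fin h → ℕ) (π : Equiv.Perm (Fin h)) : Prop :=
  ∀ u v w : Fin h, C u = C w → π u ≤ π v → π v ≤ π w → C v = C u

/-- `sC E C` is the maximum, over permutations `π` respecting `C`, of the number
of edges `(u,v)` of the digraph with edge set `E` having `π u < π v`. -/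
noncomputable def sC {h : ℕ} (E : Finset (Fin h × Fin h)) (C : Fin h → ℕ) : ℕ :=
  (Finset.univ.filter fun π : Equiv.Perm (Fin h) => Respects C π).sup
    (fun π => (E.filter fun e => π e.1 < π e.2).card)

/-- The skewness `s(H)`: minimum over all vertex colorings `C` of `sC E C`. -/
noncomputable def skew {h : ℕ} (E : Finset (Fin h × Fin h)) : ℕ :=
  sInf (Set.range (sC E))

def IsRootedStar {h : ℕ} (E : Finset (Fin h × Fin h)) : Prop :=
  ∃ c : Fin h, (∀ e ∈ E, e.1 = c) ∨ (∀ e ∈ E, e.2 = c)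

theorem stmt5 {h : ℕ} (E : Finset (Fin h × Fin h))
    (hsimple : ∀ e ∈ E, e.1 ≠ e.2)
    (hacyc : ∀ v, ¬ Relation.TransGen (fun a b => (a, b) ∈ E) v v)
    (hm : 2 ≤ E.card)
    (hiso : ∀ v : Fin h, ∃ e ∈ E, e.1 = v ∨ e.2 = v)
    (hstar : ¬ IsRootedStar E) :
    skew E ≤ E.card - 1 := by
  -- Find two edges with different sources and different sinks.
  have hex : ∃ e1 ∈ E, ∃ e2 ∈ E, e1.1 ≠ e2.1 ∧ e1.2 ≠ e2.2 := by
    by_contra hc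
    push_neg at hc
    obtain ⟨e1, he1, e2, he2, hne⟩ := Finset.one_lt_card.mp hm
    by_cases h12 : e1.1 = e2.1
    · exact hstar ⟨e1.1, Or.inl fun e he => by
        by_cases h1 : e.1 = e1.1
        · exact h1
        · have hA : e.2 = e1.2 := hc e he e1 he1 h1
          have h2 : e.1 ≠ e2.1 := fun hh => h1 (hh.trans h12.symm)
          have hB : e.2 = e2.2 := hc e he e2 he2 h2
          exact absurd (Prod.ext h12 (hA.symm.trans hB)) hne⟩
    · have hk : e1.2 = e2.2 := hc e1 he1 e2 he2 h12
      exact hstar ⟨e1.2, Or.inr fun e he => by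
        by_cases h1 : e.2 = e1.2
        · exact h1
        · have hA : e.1 = e1.1 := by
            by_contra hh
            exact h1 (hc e he e1 he1 hh)
          have hB : e.1 = e2.1 := by
            by_contra hh
            exact h1 ((hc e he e2 he2 hh).trans hk.symm)
          exact absurd (hA.symm.trans hB) h12⟩
  obtain ⟨e1, he1, e2, he2, hne1, hne2⟩ := hex
  set x := e1.1 with hx
  set y := e1.2 with hy
  set z := e2.1 with hz
  set w := e2.2 with hw
  have hxy : x ≠ y := hsimple e1 he1
  have hzw : z ≠ w := hsimple e2 he2
  classical
  set C : Fin h → ℕ := fun v => if v = x ∨ v = w then 0 else if v = y ∨ v = z then 1 else 2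
    with hC
  have hCx : C x = 0 := by simp [hC]
  have hCw : C w = 0 := by simp [hC]
  have hCy : C y = 1 := by simp [hC, hxy.symm, hne2]
  have hCz : C z = 1 := by simp [hC, hne1.symm, hzw]
  have hsCle : sC E C ≤ E.card - 1 := by
    apply Finset.sup_le
    intro π hπ
    have hR : Respects C π := (Finset.mem_filter.mp hπ).2
    -- not both edges forward
    have hback : ∃ eb ∈ E, ¬ π eb.1 < π eb.2 := by
      by_cases hfwd : π x < π y
      · refine ⟨e2, he2, ?_⟩
        intro hzw'
        have h1 : π z < π x := by
          by_contra hh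
          push_neg at hh
          have := hR x z w (hCx.trans hCw.symm) hh hzw'.le
          rw [hCz, hCx] at this
          exact one_ne_zero this
        have := hR z x y (hCz.trans hCy.symm) h1.le hfwd.le
        rw [hCx, hCz] at this
        exact zero_ne_one this
      · exact ⟨e1, he1, hfwd⟩
    obtain ⟨eb, heb, hebn⟩ := hback
    have hsub : (E.filter fun e => π e.1 < π e.2) ⊆ E.erase eb := by
      intro a ha
      rw [Finset.mem_filter] at ha
      rw [Finset.mem_erase]
      exact ⟨fun hh => hebn (hh ▸ ha.2), ha.1⟩
    calc (E.filter fun e => π e.1 < π e.2).card ≤ (E.erase eb).card :=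
          Finset.card_le_card hsub
      _ = E.card - 1 := Finset.card_erase_of_mem heb
  exact le_trans (Nat.sInf_le ⟨C, rfl⟩) hsCle
end

section
/- If H is a bipartite dag with m edges and a bipartition (A,B) such that exactly ⌊m/2⌋ of the edges go from A to B (and the remaining ⌈m/2⌉ go from B to A, or vice versa), then s(H) = ⌈m/2⌉. -/
open scoped Classical

/-- Sorting by color gives a respecting permutation. -/
lemma exists_respects {h : ℕ} (C : Fin h → ℕ) : ∃ π, Respects C π := by
  refine ⟨(Tuple.sort C)⁻¹, fun u v w huw h1 h2 => ?_⟩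
  have hm := Tuple.monotone_sort C
  have e1 : C u = (C ∘ Tuple.sort C) ((Tuple.sort C)⁻¹ u) := by simp
  have e2 : C v = (C ∘ Tuple.sort C) ((Tuple.sort C)⁻¹ v) := by simp
  have e3 : C w = (C ∘ Tuple.sort C) ((Tuple.sort C)⁻¹ w) := by simp
  have l1 := hm h1
  have l2 := hm h2
  rw [← e1, ← e2] at l1
  rw [← e2, ← e3] at l2
  omega

theorem stmt6 {h : ℕ} (E : Finset (Fin h × Fin h))
    (hacyc : ∀ v, ¬ Relation.TransGen (fun a b => (a, b) ∈ E) v v)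
    (A : Finset (Fin h))
    (hbip : ∀ e ∈ E, (e.1 ∈ A ∧ e.2 ∉ A) ∨ (e.1 ∉ A ∧ e.2 ∈ A))
    (hhalf : (E.filter fun e => e.1 ∈ A).card = E.card / 2 ∨
      (E.filter fun e => e.1 ∉ A).card = E.card / 2) :
    skew E = (E.card + 1) / 2 := by
  set m := E.card with hm
  have hloop : ∀ e ∈ E, e.1 ≠ e.2 := by
    rintro ⟨a, b⟩ he heq
    simp only at heq
    subst heq
    exact hacyc a (Relation.TransGen.single he)
  have hab : (E.filter fun e => e.1 ∈ A).card + (E.filter fun e => e.1 ∉ A).card = m :=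
    Finset.card_filter_add_card_filter_not _
  set C0 : Fin h → ℕ := fun v => if v ∈ A then 0 else 1 with hC0
  -- upper bound: sC E C0 ≤ (m+1)/2
  have hub : sC E C0 ≤ (m + 1) / 2 := by
    apply Finset.sup_le
    intro π hπ
    rw [Finset.mem_filter] at hπ
    have hresp := hπ.2
    -- the counted edge set lies in one direction class
    by_cases hex : ∃ e ∈ E, e.1 ∈ A ∧ π e.1 < π e.2
    · obtain ⟨e, he, heA, helt⟩ := hex
      have heB : e.2 ∉ A := by rcases hbip e he with ⟨_, h2⟩ | ⟨h1, _⟩ <;> tauto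
      have hsub : (E.filter fun f => π f.1 < π f.2) ⊆ E.filter fun f => f.1 ∈ A := by
        intro f hf
        rw [Finset.mem_filter] at hf ⊢
        refine ⟨hf.1, ?_⟩
        by_contra hfB
        have hfA : f.2 ∈ A := by rcases hbip f hf.1 with h | h <;> tauto
        have hflt := hf.2
        -- e.1 ∈ A, e.2 ∉ A, f.1 ∉ A, f.2 ∈ A, π e.1 < π e.2, π f.1 < π f.2
        rcases le_or_gt (π e.2) (π f.2) with hc | hc
        · -- e.1 < e.2 ≤ f.2 : B vertex e.2 between A vertices e.1, f.2
          have := hresp e.1 e.2 f.2 (by simp [hC0, heA, hfA]) helt.le hc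
          simp [hC0, heA, heB] at this
        · -- f.1 < f.2 < e.2 : A vertex f.2 between B vertices f.1, e.2
          have := hresp f.1 f.2 e.2 (by simp [hC0, hfB, heB]) hflt.le hc.le
          simp [hC0, hfA, hfB] at this
      have hle := Finset.card_le_card hsub
      omega
    · push_neg at hex
      have hsub : (E.filter fun f => π f.1 < π f.2) ⊆ E.filter fun f => f.1 ∉ A := by
        intro f hf
        rw [Finset.mem_filter] at hf ⊢
        exact ⟨hf.1, fun hfA => absurd hf.2 (by simpa using hex f hf.1 hfA)⟩
      have hle := Finset.card_le_card hsub
      omega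
  -- lower bound: for every C, (m+1)/2 ≤ sC E C
  have hlb : ∀ C : Fin h → ℕ, (m + 1) / 2 ≤ sC E C := by
    intro C
    obtain ⟨π, hπ⟩ := exists_respects C
    set π' : Equiv.Perm (Fin h) := π.trans Fin.revPerm with hπ'def
    have hπ'resp : Respects C π' := by
      intro u v w huw h1 h2
      simp only [hπ'def, Equiv.trans_apply, Fin.revPerm_apply, Fin.rev_le_rev] at h1 h2
      exact (hπ w v u huw.symm h2 h1).trans huw.symm
    have hmem : π ∈ Finset.univ.filter fun σ => Respects C σ := by
      simp [hπ]
    have hmem' : π' ∈ Finset.univ.filter fun σ => Respects C σ := by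
      simp [hπ'resp]
    have h1 := Finset.le_sup (f := fun σ : Equiv.Perm (Fin h) =>
      (E.filter fun e => σ e.1 < σ e.2).card) hmem
    have h2 := Finset.le_sup (f := fun σ : Equiv.Perm (Fin h) =>
      (E.filter fun e => σ e.1 < σ e.2).card) hmem'
    have hcompl : (E.filter fun e => π' e.1 < π' e.2) =
        E.filter fun e => ¬ (π e.1 < π e.2) := by
      apply Finset.filter_congr
      intro e he
      have hne : π e.1 ≠ π e.2 := fun hc => hloop e he (π.injective hc)
      simp only [hπ'def, Equiv.trans_apply, Fin.revPerm_apply, Fin.rev_lt_rev]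
      constructor
      · intro hlt; omega
      · intro hnlt
        rcases lt_or_ge (π e.2) (π e.1) with hc | hc
        · exact hc
        · exact absurd (lt_of_le_of_ne hc hne) hnlt
    have hsum : (E.filter fun e => π e.1 < π e.2).card +
        (E.filter fun e => π' e.1 < π' e.2).card = m := by
      rw [hcompl]
      exact Finset.card_filter_add_card_filter_not _
    unfold sC
    omega
  -- conclude
  have hle1 : skew E ≤ (m + 1) / 2 := le_trans (Nat.sInf_le ⟨C0, rfl⟩) hub
  have hle2 : (m + 1) / 2 ≤ skew E := by
    apply le_csInf (Set.range_nonempty _)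
    rintro x ⟨C, rfl⟩
    exact hlb C
  omega
end

section
/- For the transitive tournament T_h on vertices {1,...,h} with edges (i,j) for i < j: if h is even then s(T_h) ≤ h²/4, and if h is odd then s(T_h) ≤ (h²−1)/4. -/
open scoped Classical

/-- The edge set of the transitive tournament on `Fin h`. -/
def THedges (h : ℕ) : Finset (Fin h × Fin h) :=
  Finset.univ.filter (fun e : Fin h × Fin h => e.1 < e.2)

/-!
Colour each vertex `i` like its mirror image `rev i`. The map `(u, v) ↦ (rev v, rev u)` is an
involution on the edges of `T_h`. If an edge is not its own mirror image, its endpoints lie in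
different colour classes; both classes are intervals of any respecting `π`, so one precedes the
other, and then exactly one of the edge and its mirror image points forward. Hence at most half of
the `h (h - 1) / 2 - ⌊h / 2⌋` non-self-mirror edges and all `⌊h / 2⌋` self-mirror edges are
forward, i.e. at most `⌊h² / 4⌋` edges.
-/

open Finset

lemma two_mul_card_le_card_add_card_fixed {α : Type*} [DecidableEq α] {σ : α → α}
    (hσ : Function.Involutive σ) {E F : Finset α} (hE : ∀ e ∈ E, σ e ∈ E) (hFE : F ⊆ E)
    (hF : ∀ e ∈ F, σ e ≠ e → σ e ∉ F) :
    2 * #F ≤ #E + #{e ∈ E | σ e = e} := by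
  set N := {e ∈ F | ¬σ e = e}
  have hdisj : Disjoint F (N.image σ) := by
    simp only [disjoint_left, mem_image, not_exists, not_and]
    intro x hx e he hex
    rw [mem_filter] at he
    exact hF e he.1 he.2 (hex ▸ hx)
  have hsub : F ∪ N.image σ ⊆ E := by
    refine union_subset hFE fun x hx => ?_
    obtain ⟨e, he, rfl⟩ := mem_image.mp hx
    exact hE e (hFE (mem_filter.mp he).1)
  have hcover : #F + #N ≤ #E := by
    rw [← card_image_of_injective N hσ.injective, ← card_union_of_disjoint hdisj]
    exact card_le_card hsub
  have hfixed : #{e ∈ F | σ e = e} ≤ #{e ∈ E | σ e = e} :=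
    card_le_card (filter_subset_filter _ hFE)
  have hsplit : #{e ∈ F | σ e = e} + #N = #F := card_filter_add_card_filter_not _
  omega

theorem Respects.lt_of_lt {h : ℕ} {C : Fin h → ℕ} {π : Equiv.Perm (Fin h)}
    (hπ : Respects C π) {a a' b b' : Fin h} (ha : C a' = C a) (hb : C b' = C b)
    (hab : C a ≠ C b) (hlt : π a < π b) : π a' < π b' := by
  by_contra! hle
  by_cases ha'b : π a' ≤ π b
  · exact hab (ha.symm.trans ((hπ b' a' b hb hle ha'b).trans hb))
  · exact hab (hπ a b a' ha.symm hlt.le (not_le.mp ha'b).le).symm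

section Mirror

variable {h : ℕ}

def mirrorColoring (h : ℕ) (i : Fin h) : ℕ := min i.val i.rev.val

lemma mirrorColoring_rev (u : Fin h) : mirrorColoring h u.rev = mirrorColoring h u := by
  simp only [mirrorColoring, Fin.rev_rev, min_comm]

lemma mirrorColoring_eq_iff {u v : Fin h} :
    mirrorColoring h u = mirrorColoring h v ↔ v = u ∨ v = u.rev := by
  simp only [mirrorColoring, Fin.ext_iff, Fin.val_rev]
  omega

def edgeRev (e : Fin h × Fin h) : Fin h × Fin h := (e.2.rev, e.1.rev)

lemma edgeRev_involutive : Function.Involutive (edgeRev (h := h)) := fun e => by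
  simp [edgeRev]

lemma mem_THedges {e : Fin h × Fin h} : e ∈ THedges h ↔ e.1 < e.2 := by
  simp [THedges]

lemma edgeRev_mem_THedges {e : Fin h × Fin h} (he : e ∈ THedges h) : edgeRev e ∈ THedges h := by
  simpa [mem_THedges, edgeRev] using he

lemma two_mul_card_THedges_le : 2 * #(THedges h) ≤ h * (h - 1) := by
  have : #(THedges h) = h.choose 2 := by
    rw [THedges]
    convert Fintype.card_product_filter_lt (α := Fin h)
    simp
  rw [this, Nat.choose_two_right]
  omega

lemma card_THedges_fixed_le : #{e ∈ THedges h | edgeRev e = e} ≤ h / 2 := by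
  refine (card_le_card_of_injOn (fun e => e.1.val) (t := range (h / 2)) ?_ ?_).trans
    (card_range _).le
  · intro e he
    rw [mem_coe, mem_filter, mem_THedges, edgeRev, Prod.ext_iff] at he
    obtain ⟨hlt, -, hfix⟩ := he
    have hrev : e.1 < e.1.rev := by rwa [← hfix] at hlt
    rw [Fin.lt_def, Fin.val_rev] at hrev
    show e.1.val ∈ range (h / 2)
    rw [mem_range]
    omega
  · intro e he f hf hef
    rw [mem_coe, mem_filter, edgeRev, Prod.ext_iff] at he hf
    have h1 : e.1 = f.1 := Fin.ext hef
    exact Prod.ext h1 (by rw [← he.2.2, ← hf.2.2, h1])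

lemma not_lt_edgeRev {π : Equiv.Perm (Fin h)} (hπ : Respects (mirrorColoring h) π)
    {e : Fin h × Fin h} (he : e ∈ THedges h) (hne : edgeRev e ≠ e) (hlt : π e.1 < π e.2) :
    ¬ π (edgeRev e).1 < π (edgeRev e).2 := by
  obtain ⟨u, v⟩ := e
  rw [mem_THedges] at he
  have hv : v ≠ u.rev := by
    rintro rfl
    exact hne (by simp [edgeRev])
  have hcol : mirrorColoring h u ≠ mirrorColoring h v := by
    rw [Ne, mirrorColoring_eq_iff]
    exact not_or.mpr ⟨he.ne', hv⟩
  exact not_lt.mpr (hπ.lt_of_lt (mirrorColoring_rev u) (mirrorColoring_rev v) hcol hlt).le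

lemma four_mul_card_forward_le {π : Equiv.Perm (Fin h)} (hπ : Respects (mirrorColoring h) π) :
    4 * #{e ∈ THedges h | π e.1 < π e.2} ≤ h ^ 2 := by
  have hcount := two_mul_card_le_card_add_card_fixed edgeRev_involutive
    (fun _ => edgeRev_mem_THedges) (filter_subset _ (THedges h)) fun e he hne hrev =>
      not_lt_edgeRev hπ (mem_filter.mp he).1 hne (mem_filter.mp he).2 (mem_filter.mp hrev).2
  have hE := two_mul_card_THedges_le (h := h)
  have hX := card_THedges_fixed_le (h := h)
  have : h * (h - 1) + 2 * (h / 2) ≤ h ^ 2 := by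
    rcases h with _ | h
    · simp
    · rw [Nat.add_sub_cancel, sq]; nlinarith [Nat.div_mul_le_self (h + 1) 2]
  omega

end Mirror

lemma skew_THedges_le (h : ℕ) : skew (THedges h) ≤ h ^ 2 / 4 :=
  (Nat.sInf_le (Set.mem_range_self (mirrorColoring h))).trans <|
    Finset.sup_le fun π hπ =>
      (Nat.le_div_iff_mul_le (by norm_num)).mpr <| by
        rw [mul_comm]; exact four_mul_card_forward_le (mem_filter.mp hπ).2

theorem stmt7 (h : ℕ) :
    (Even h → skew (THedges h) ≤ h ^ 2 / 4) ∧
    (Odd h → skew (THedges h) ≤ (h ^ 2 - 1) / 4) := by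
  refine ⟨fun _ => skew_THedges_le h, fun ⟨k, hk⟩ => ?_⟩
  have hsq : h ^ 2 = 4 * (k ^ 2 + k) + 1 := by rw [hk]; ring
  have := skew_THedges_le h
  omega
end

section
/- Let r = 2^t for a positive integer t, let x be a positive integer, and let n be a multiple of r^x. For every set X = {π_1,...,π_x} of permutations of [n], there exist pairwise disjoint sets A_1,...,A_r ⊆ [n], each of size n/r^x, that are consistent with X: for every i ∈ [x] and every pair j ≠ j', either all elements of A_j precede all elements of A_{j'} in π_i, or all elements of A_{j'} precede all elements of A_j in π_i. -/
/-!
In a linear order, take sets `A j`, `j ∈ I`, each of size at least `#I * s`. Let `q` be the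
least of the `s`-th smallest elements of the `A j`, attained at `j₀`. The `s` elements of `A j₀`
up to `q` form `B j₀`, and every other `A j` has at most `s` elements up to `q`, so recursing on
the elements above `q` yields pairwise separated `s`-subsets. Doing this once for each of the `x`
permutations, starting from `A j = [n]` with `s = n / r ^ x` and shrinking by a factor `r` per
permutation, gives sets consistent with all of them; separation in `π₁` makes them disjoint.
-/
/-- `A ⇒ B` in `π`: every element of `A` appears before every element of `B`
in the permutation `π`. -/
def Before {n : ℕ} (π : Equiv.Perm (Fin n)) (A B : Finset (Fin n)) : Prop :=
  ∀ a ∈ A, ∀ b ∈ B, π a < π b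

open Finset

section LinearOrder

variable {α ι : Type*} [LinearOrder α]

theorem Finset.exists_card_filter_le_eq (A : Finset α) {s : ℕ} (hs : 0 < s) (hsA : s ≤ #A) :
    ∃ q, #{a ∈ A | a ≤ q} = s := by
  set e := A.orderEmbOfFin rfl
  refine ⟨e ⟨s - 1, by omega⟩, ?_⟩
  have : {a ∈ A | a ≤ e ⟨s - 1, by omega⟩} = (Iic ⟨s - 1, by omega⟩).map e.toEmbedding := by
    ext a
    simp only [mem_filter, mem_map, mem_Iic, RelEmbedding.coe_toEmbedding]
    constructor
    · rintro ⟨ha, hle⟩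
      obtain ⟨i, rfl⟩ : a ∈ Set.range e := by rw [A.range_orderEmbOfFin]; exact ha
      exact ⟨i, e.le_iff_le.mp hle, rfl⟩
    · rintro ⟨i, hi, rfl⟩
      exact ⟨A.orderEmbOfFin_mem rfl i, e.le_iff_le.mpr hi⟩
  rw [this, card_map, Fin.card_Iic, Fin.val_mk]
  omega

def Precedes (A B : Finset α) : Prop := ∀ a ∈ A, ∀ b ∈ B, a < b

theorem exists_card_filter_le_threshold {s : ℕ} (hs : 0 < s) {I : Finset ι} (hI : I.Nonempty)
    {A : ι → Finset α} (hA : ∀ j ∈ I, s ≤ #(A j)) :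
    ∃ j₀ ∈ I, ∃ q, #{a ∈ A j₀ | a ≤ q} = s ∧ ∀ j ∈ I, #{a ∈ A j | a ≤ q} ≤ s := by
  have : Nonempty α := by
    obtain ⟨j, hj⟩ := hI
    exact (card_pos.mp (hs.trans_le (hA j hj))).to_type
  choose! q hq using fun j hj => (A j).exists_card_filter_le_eq hs (hA j hj)
  obtain ⟨j₀, hj₀, hmin⟩ := I.exists_min_image q hI
  refine ⟨j₀, hj₀, q j₀, hq j₀ hj₀, fun j hj => ?_⟩
  calc #{a ∈ A j | a ≤ q j₀} ≤ #{a ∈ A j | a ≤ q j} :=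
        card_le_card (monotone_filter_right _ fun _ _ h => h.trans (hmin j hj))
    _ = s := hq j hj

theorem exists_pairwise_precedes_subsets [DecidableEq ι] (s : ℕ) (I : Finset ι)
    (A : ι → Finset α) (hA : ∀ j ∈ I, #I * s ≤ #(A j)) :
    ∃ B : ι → Finset α, (∀ j ∈ I, B j ⊆ A j ∧ #(B j) = s) ∧
      (I : Set ι).Pairwise fun j j' => Precedes (B j) (B j') ∨ Precedes (B j') (B j) := by
  induction I using Finset.strongInduction generalizing A with
  | H I ih =>
  rcases Nat.eq_zero_or_pos s with rfl | hs
  · exact ⟨fun _ => ∅, by simp, fun _ _ _ _ _ => Or.inl (by simp [Precedes])⟩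
  rcases I.eq_empty_or_nonempty with rfl | hI
  · exact ⟨A, by simp, by simp⟩
  obtain ⟨j₀, hj₀, q, hq₀, hq⟩ := exists_card_filter_le_threshold hs hI
    fun j hj => (Nat.le_mul_of_pos_left s hI.card_pos).trans (hA j hj)
  have hcard : ∀ j ∈ I.erase j₀, #(I.erase j₀) * s ≤ #{a ∈ A j | q < a} := by
    intro j hj
    have hjI := mem_of_mem_erase hj
    have hsplit := card_filter_add_card_filter_not (s := A j) (p := fun a => q < a)
    simp only [not_lt] at hsplit
    have : #(I.erase j₀) * s + s = #I * s := by
      rw [card_erase_of_mem hj₀, ← add_one_mul, Nat.sub_one_add_one hI.card_pos.ne']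
    linarith [hA j hjI, hq j hjI]
  obtain ⟨B, hB, hBsep⟩ := ih (I.erase j₀) (erase_ssubset hj₀) _ hcard
  refine ⟨Function.update B j₀ {a ∈ A j₀ | a ≤ q}, fun j hj => ?_, fun j hj j' hj' hne => ?_⟩
  · rcases eq_or_ne j j₀ with rfl | hj₀
    · simpa using hq₀
    · simp only [Function.update_of_ne hj₀]
      obtain ⟨hsub, hc⟩ := hB j (mem_erase.mpr ⟨hj₀, hj⟩)
      exact ⟨hsub.trans (filter_subset _ _), hc⟩
  · have hlow : ∀ j ∈ I.erase j₀, Precedes {a ∈ A j₀ | a ≤ q} (B j) := fun j hj a ha b hb =>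
      (mem_filter.mp ha).2.trans_lt (mem_filter.mp ((hB j hj).1 hb)).2
    rcases eq_or_ne j j₀ with rfl | hj₀
    · simpa [Function.update_of_ne hne.symm] using
        Or.inl (hlow j' (mem_erase.mpr ⟨hne.symm, hj'⟩))
    rcases eq_or_ne j' j₀ with rfl | hj'₀
    · simpa [Function.update_of_ne hne] using Or.inr (hlow j (mem_erase.mpr ⟨hne, hj⟩))
    simp only [Function.update_of_ne hj₀, Function.update_of_ne hj'₀]
    exact hBsep (mem_erase.mpr ⟨hj₀, hj⟩) (mem_erase.mpr ⟨hj'₀, hj'⟩) hne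

end LinearOrder

section Permutations

variable {ι : Type*} {n : ℕ} {π : Equiv.Perm (Fin n)}

theorem Before.mono {A B A' B' : Finset (Fin n)} (h : Before π A B) (hA : A' ⊆ A) (hB : B' ⊆ B) :
    Before π A' B' :=
  fun a ha b hb => h a (hA ha) b (hB hb)

theorem Before.disjoint {A B : Finset (Fin n)} (h : Before π A B) : Disjoint A B :=
  disjoint_left.mpr fun a ha hb => lt_irrefl _ (h a ha a hb)

theorem before_map_symm_iff {S T : Finset (Fin n)} :
    Before π (S.map π.symm.toEmbedding) (T.map π.symm.toEmbedding) ↔ Precedes S T := by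
  simp only [Before, Precedes, mem_map_equiv, Equiv.symm_symm]
  constructor
  · intro h a ha b hb
    simpa using h (π.symm a) (by simpa) (π.symm b) (by simpa)
  · exact fun h a ha b hb => h _ ha _ hb

variable [Fintype ι] [DecidableEq ι]

theorem exists_pairwise_before_subsets (π : Equiv.Perm (Fin n)) (s : ℕ) (A : ι → Finset (Fin n))
    (hA : ∀ j, Fintype.card ι * s ≤ #(A j)) :
    ∃ B : ι → Finset (Fin n), (∀ j, B j ⊆ A j ∧ #(B j) = s) ∧
      Pairwise fun j j' => Before π (B j) (B j') ∨ Before π (B j') (B j) := by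
  obtain ⟨B, hB, hsep⟩ := exists_pairwise_precedes_subsets s univ
    (fun j => (A j).map π.toEmbedding) fun j _ => by simpa using hA j
  refine ⟨fun j => (B j).map π.symm.toEmbedding, fun j => ?_, fun j j' hne => ?_⟩
  · obtain ⟨hsub, hcard⟩ := hB j (mem_univ j)
    refine ⟨fun a ha => ?_, by rw [card_map, hcard]⟩
    simpa using hsub (mem_map_equiv.mp ha)
  · simpa only [before_map_symm_iff] using hsep (mem_univ j) (mem_univ j') hne

theorem exists_consistent_subsets (s : ℕ) : ∀ {x : ℕ} (X : Fin x → Equiv.Perm (Fin n))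
    (A : ι → Finset (Fin n)), (∀ j, Fintype.card ι ^ x * s ≤ #(A j)) →
    ∃ B : ι → Finset (Fin n), (∀ j, B j ⊆ A j ∧ #(B j) = s) ∧
      ∀ i, Pairwise fun j j' => Before (X i) (B j) (B j') ∨ Before (X i) (B j') (B j)
  | 0, _, A, hA => by
    choose B hB using fun j => exists_subset_card_eq (by simpa using hA j)
    exact ⟨B, hB, fun i => i.elim0⟩
  | x + 1, X, A, hA => by
    obtain ⟨C, hC, hCsep⟩ := exists_pairwise_before_subsets (X 0) (Fintype.card ι ^ x * s) A
      (by simpa only [← mul_assoc, ← pow_succ'] using hA)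
    obtain ⟨B, hB, hBsep⟩ := exists_consistent_subsets s (fun i => X i.succ) C
      fun j => (hC j).2.ge
    refine ⟨B, fun j => ⟨(hB j).1.trans (hC j).1, (hB j).2⟩, Fin.cases ?_ hBsep⟩
    intro j j' hne
    exact (hCsep hne).imp (·.mono (hB j).1 (hB j').1) (·.mono (hB j').1 (hB j).1)

end Permutations

theorem stmt14_general (t x n : ℕ) (hx : 1 ≤ x) (X : Fin x → Equiv.Perm (Fin n)) :
    ∃ A : Fin (2 ^ t) → Finset (Fin n),
      (∀ j j', j ≠ j' → Disjoint (A j) (A j')) ∧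
      (∀ j, (A j).card = n / (2 ^ t) ^ x) ∧
      (∀ (i : Fin x) (j j' : Fin (2 ^ t)), j ≠ j' →
        Before (X i) (A j) (A j') ∨ Before (X i) (A j') (A j)) := by
  obtain ⟨A, hA, hcons⟩ := exists_consistent_subsets (ι := Fin (2 ^ t)) (n / (2 ^ t) ^ x) X
    (fun _ => univ) fun _ => by simpa using Nat.mul_div_le n _
  refine ⟨A, fun j j' hne => ?_, fun j => (hA j).2, fun i j j' hne => hcons i hne⟩
  rcases hcons ⟨0, hx⟩ hne with h | h
  exacts [h.disjoint, h.disjoint.symm]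

theorem stmt14 (t x n : ℕ) (ht : 1 ≤ t) (hx : 1 ≤ x)
    (hn : (2 ^ t) ^ x ∣ n) (X : Fin x → Equiv.Perm (Fin n)) :
    ∃ A : Fin (2 ^ t) → Finset (Fin n),
      (∀ j j', j ≠ j' → Disjoint (A j) (A j')) ∧
      (∀ j, (A j).card = n / (2 ^ t) ^ x) ∧
      (∀ (i : Fin x) (j j' : Fin (2 ^ t)), j ≠ j' →
        Before (X i) (A j) (A j') ∨ Before (X i) (A j') (A j)) :=
  stmt14_general t x n hx X
end

section
/- Let H be a totally balanced graph with h vertices and m edges, so m = a(H)(h−1). Let D_1 ⊆ D_2 ⊆ ... be built as unions of copies H_1,...,H_t of H, where D_i = H_1 ∪ ... ∪ H_i, and suppose for each i ≥ 2 the copy H_i shares at least one vertex with D_{i−1}. Let h_1 = h and h_i = |V(H_i) \ V(D_{i−1})| for i ≥ 2. Then |E(D_t)| ≥ a(H)(|V(D_t)| − 1), where |V(D_t)| = Σ h_i. -/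
open scoped Classical

/-- The edges of `G` with both endpoints in `s`. -/
noncomputable def edgesIn {V : Type} [Fintype V] (G : SimpleGraph V) (s : Finset V) :
    Finset (Sym2 V) :=
  G.edgeFinset.filter (fun e => ∀ v ∈ e, v ∈ s)

/-- Fractional arboricity. -/
noncomputable def fracArb {V : Type} [Fintype V] (G : SimpleGraph V) : ℝ :=
  sSup {x : ℝ | ∃ s : Finset V, 2 ≤ s.card ∧
    x = ((edgesIn G s).card : ℝ) / ((s.card : ℝ) - 1)}

/-- `H` is totally balanced if its fractional arboricity equals
`|E(H)|/(|V(H)|-1)`. -/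
def TotallyBalanced {V : Type} [Fintype V] (G : SimpleGraph V) : Prop :=
  fracArb G = (G.edgeFinset.card : ℝ) / ((Fintype.card V : ℝ) - 1)


/-!
Add the copies one at a time. A copy `H_i` meeting the current union `D` in the nonempty vertex
set `φ(T)` brings `|W| - |T|` new vertices, and all but at most `a(H)(|T| - 1)` of its `|E(H)|`
edges are new, the old ones being edges of `H` inside `T`. Since `|E(H)| = a(H)(|W| - 1)` for a
totally balanced `H`, the edge count grows by at least `a(H)` per new vertex.
-/

open Finset

section FracArb

variable {W : Type} [Fintype W] (H : SimpleGraph W)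

lemma fracArb_nonneg : 0 ≤ fracArb H :=
  Real.sSup_nonneg fun _ ⟨_, hs, hx⟩ => hx ▸ div_nonneg (Nat.cast_nonneg _)
    (sub_nonneg.mpr (by exact_mod_cast one_le_two.trans hs))

lemma edgesIn_eq_empty_of_card_le_one {T : Finset W} (hT : #T ≤ 1) : edgesIn H T = ∅ := by
  refine filter_eq_empty_iff.mpr fun e he hmem => ?_
  induction e using Sym2.ind with
  | _ x y =>
    exact H.ne_of_adj (H.mem_edgeFinset.mp he) (card_le_one.mp hT x
      (hmem x (Sym2.mem_mk_left x y)) y (hmem y (Sym2.mem_mk_right x y)))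

lemma card_edgesIn_div_le_fracArb {T : Finset W} (hT : 2 ≤ #T) :
    (#(edgesIn H T) : ℝ) / (#T - 1) ≤ fracArb H :=
  le_csSup ((Set.finite_range fun s : Finset W => (#(edgesIn H s) : ℝ) / (#s - 1)).subset
    (by rintro _ ⟨s, -, rfl⟩; exact ⟨s, rfl⟩)).bddAbove ⟨T, hT, rfl⟩

lemma card_edgesIn_le_fracArb_mul {T : Finset W} (hT : T.Nonempty) :
    (#(edgesIn H T) : ℝ) ≤ fracArb H * (#T - 1) := by
  rcases le_or_gt #T 1 with h1 | h2
  · simp [edgesIn_eq_empty_of_card_le_one H h1, le_antisymm h1 hT.card_pos]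
  · have hpos : (0 : ℝ) < #T - 1 := by
      have : (2 : ℝ) ≤ #T := by exact_mod_cast h2
      linarith
    exact (div_le_iff₀ hpos).mp (card_edgesIn_div_le_fracArb H h2)

lemma TotallyBalanced.card_edgeFinset_eq (hbal : TotallyBalanced H) :
    (#H.edgeFinset : ℝ) = fracArb H * (Fintype.card W - 1) := by
  by_cases hW : (Fintype.card W : ℝ) - 1 = 0
  -- `TotallyBalanced` then reads `fracArb H = 0 / 0`, but `H` has no edges.
  · have hW1 : Fintype.card W = 1 := by exact_mod_cast sub_eq_zero.mp hW
    have := H.card_edgeFinset_le_card_choose_two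
    simp_all
  · rw [hbal, div_mul_cancel₀ _ hW]

end FracArb

section Copies

variable {W V ι : Type} [Fintype W] [DecidableEq V] (H : SimpleGraph W)

lemma image_edgeFinset_inter_subset_image_edgesIn {φ : W → V} {S : Finset V}
    {E : Finset (Sym2 V)} (hE : ∀ e ∈ E, ∀ v ∈ e, v ∈ S) :
    H.edgeFinset.image (Sym2.map φ) ∩ E ⊆ (edgesIn H {w | φ w ∈ S}).image (Sym2.map φ) := by
  intro e he
  obtain ⟨he, heE⟩ := mem_inter.mp he
  obtain ⟨e', he', rfl⟩ := mem_image.mp he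
  refine mem_image_of_mem _ (mem_filter.mpr ⟨he', fun w hw => ?_⟩)
  simpa using hE _ heE (φ w) (Sym2.mem_map.mpr ⟨w, hw, rfl⟩)

lemma card_image_union_add_card_preimage {φ : W → V} (hφ : Function.Injective φ)
    (S : Finset V) : #(univ.image φ ∪ S) + #{w | φ w ∈ S} = Fintype.card W + #S := by
  have hinter : univ.image φ ∩ S = ({w | φ w ∈ S} : Finset W).image φ := by
    ext; aesop
  rw [← card_image_of_injective _ hφ, ← hinter, card_union_add_card_inter,
    card_image_of_injective _ hφ, card_univ]

lemma fracArb_mul_card_union_copy_le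
    (hm : (#H.edgeFinset : ℝ) = fracArb H * (Fintype.card W - 1))
    {φ : W → V} (hφ : Function.Injective φ) {S : Finset V} {E : Finset (Sym2 V)}
    (hE : ∀ e ∈ E, ∀ v ∈ e, v ∈ S) (hmeet : ∃ w, φ w ∈ S)
    (hSE : fracArb H * (#S - 1) ≤ #E) :
    fracArb H * (#(univ.image φ ∪ S) - 1) ≤ #(H.edgeFinset.image (Sym2.map φ) ∪ E) := by
  set T : Finset W := {w | φ w ∈ S}
  set Eφ := H.edgeFinset.image (Sym2.map φ)
  have hT : T.Nonempty := let ⟨w, hw⟩ := hmeet; ⟨w, by simpa [T] using hw⟩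
  have hshared : (#(Eφ ∩ E) : ℝ) ≤ fracArb H * (#T - 1) :=
    calc (#(Eφ ∩ E) : ℝ) ≤ #(edgesIn H T) := by
          exact_mod_cast (card_le_card (image_edgeFinset_inter_subset_image_edgesIn H hE)).trans
            card_image_le
      _ ≤ _ := card_edgesIn_le_fracArb_mul H hT
  have hV : (#(univ.image φ ∪ S) : ℝ) + #T = Fintype.card W + #S := by
    exact_mod_cast card_image_union_add_card_preimage hφ S
  have hEdges : (#(Eφ ∪ E) : ℝ) + #(Eφ ∩ E) = #H.edgeFinset + #E := by
    rw [← card_image_of_injective _ (Sym2.map.injective hφ)]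
    exact_mod_cast card_union_add_card_inter _ _
  have hsplit : (#(univ.image φ ∪ S) : ℝ) - 1 = (Fintype.card W - 1) + (#S - 1) - (#T - 1) := by
    linarith
  rw [hsplit, mul_sub, mul_add]
  linarith

noncomputable def unionVerts (φ : ι → W → V) (s : Finset ι) : Finset V :=
  s.biUnion fun i => univ.image (φ i)

noncomputable def unionEdges (φ : ι → W → V) (s : Finset ι) : Finset (Sym2 V) :=
  s.biUnion fun i => H.edgeFinset.image (Sym2.map (φ i))

lemma mem_unionVerts_of_mem_unionEdges {φ : ι → W → V} {s : Finset ι} {e : Sym2 V}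
    (he : e ∈ unionEdges H φ s) {v : V} (hv : v ∈ e) : v ∈ unionVerts φ s := by
  obtain ⟨i, hi, he⟩ := mem_biUnion.mp he
  obtain ⟨e', -, rfl⟩ := mem_image.mp he
  obtain ⟨w, -, rfl⟩ := Sym2.mem_map.mp hv
  exact mem_biUnion.mpr ⟨i, hi, mem_image_of_mem _ (mem_univ w)⟩

theorem fracArb_mul_card_unionVerts_le [LinearOrder ι]
    (hm : (#H.edgeFinset : ℝ) = fracArb H * (Fintype.card W - 1))
    {φ : ι → W → V} (hφ : ∀ i, Function.Injective (φ i)) (s : Finset ι)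
    (hconn : ∀ i ∈ s, (s.filter (· < i)).Nonempty →
      ∃ w, φ i w ∈ unionVerts φ (s.filter (· < i))) :
    fracArb H * (#(unionVerts φ s) - 1) ≤ #(unionEdges H φ s) := by
  induction s using Finset.induction_on_max with
  | empty => simpa [unionVerts, unionEdges] using fracArb_nonneg H
  | insert a s hlt ih =>
    have hbefore_a : (insert a s).filter (· < a) = s := by
      rw [filter_insert, if_neg (lt_irrefl a), filter_true_of_mem hlt]
    have hbefore : ∀ i ∈ s, (insert a s).filter (· < i) = s.filter (· < i) := fun i hi => by
      rw [filter_insert, if_neg (hlt i hi).not_gt]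
    rw [unionVerts, unionEdges, biUnion_insert, biUnion_insert]
    rcases s.eq_empty_or_nonempty with rfl | hs
    · simp only [biUnion_empty, union_empty, card_image_of_injective _ (hφ a),
        card_image_of_injective _ (Sym2.map.injective (hφ a)), card_univ, hm, le_refl]
    · refine fracArb_mul_card_union_copy_le H hm (hφ a)
        (fun e he v hv => mem_unionVerts_of_mem_unionEdges H he hv) ?_
        (ih fun i hi hne => hbefore i hi ▸ hconn i (mem_insert_of_mem hi) (hbefore i hi ▸ hne))
      have hmeet := hconn a (mem_insert_self a s) (by rwa [hbefore_a])
      rwa [hbefore_a] at hmeet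

end Copies

theorem stmt16_general {W V : Type} [Fintype W] [DecidableEq V]
    (H : SimpleGraph W) (G : SimpleGraph V)
    (hbal : TotallyBalanced H)
    (t : ℕ) (f : Fin t → H ↪g G)
    -- each copy `H_i` (for `i ≥ 2`, i.e. `i.val ≥ 1`) shares a vertex with the
    -- union `D_{i-1}` of the previous copies
    (hconn : ∀ i : Fin t, 1 ≤ i.val →
      ((Finset.univ.image (f i)) ∩
        (Finset.univ.filter (· < i)).biUnion
          (fun j => Finset.univ.image (f j))).Nonempty) :
    ((((Finset.univ : Finset (Fin t)).biUnion
        (fun i => H.edgeFinset.image (Sym2.map (f i)))).card : ℝ)) ≥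
      fracArb H *
        ((((Finset.univ : Finset (Fin t)).biUnion
          (fun i => Finset.univ.image (f i))).card : ℝ) - 1) := by
  refine fracArb_mul_card_unionVerts_le H hbal.card_edgeFinset_eq
    (φ := fun i => f i) (fun i => (f i).injective) univ fun i _ ⟨j, hj⟩ => ?_
  have hji := (mem_filter.mp hj).2
  obtain ⟨v, hv⟩ := hconn i (by omega)
  obtain ⟨hvi, hvD⟩ := mem_inter.mp hv
  obtain ⟨w, -, rfl⟩ := mem_image.mp hvi
  exact ⟨w, hvD⟩

theorem stmt16 {W V : Type} [Fintype W] [Fintype V] [DecidableEq V]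
    (H : SimpleGraph W) (G : SimpleGraph V)
    (hW : 2 ≤ Fintype.card W) (hbal : TotallyBalanced H)
    (t : ℕ) (ht : 1 ≤ t) (f : Fin t → H ↪g G)
    -- each copy `H_i` (for `i ≥ 2`, i.e. `i.val ≥ 1`) shares a vertex with the
    -- union `D_{i-1}` of the previous copies
    (hconn : ∀ i : Fin t, 1 ≤ i.val →
      ((Finset.univ.image (f i)) ∩
        (Finset.univ.filter (· < i)).biUnion
          (fun j => Finset.univ.image (f j))).Nonempty) :
    ((((Finset.univ : Finset (Fin t)).biUnion
        (fun i => H.edgeFinset.image (Sym2.map (f i)))).card : ℝ)) ≥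
      fracArb H *
        ((((Finset.univ : Finset (Fin t)).biUnion
          (fun i => Finset.univ.image (f i))).card : ℝ) - 1) :=
  stmt16_general H G hbal t f hconn
end

section
/- Let S be a set of t (not necessarily edge-disjoint) copies of a dag H with h vertices and m edges, such that the union D(S) of the elements of S has girth k (contains a directed k-cycle) and S is minimal with this property (any proper subset's union has girth > k). Then 2 ≤ t ≤ k, D(S) has at most k·m edges, and D(S) has at most k·h vertices. -/
/-! Fix a `k`-cycle `C` of `D(S)`. By minimality, every copy `φ ∈ S` owns an edge of `C` that
lies in no other copy of `S`; otherwise `C` would survive in the union of `S \ {φ}`. These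
private edges are distinct, so `|S| ≤ |E(C)| ≤ k`, and the bounds on the edges and vertices of
`D(S)` follow by counting copies. If `|S| ≤ 1`, then `C` lies in a single copy of the dag `H`,
which is impossible, so `|S| ≥ 2`. -/

open scoped Classical

variable {V VH : Type} [Fintype V] [DecidableEq V] [Fintype VH] [DecidableEq VH]

/-- The edge set of the copy of `H` (with edge set `EH`) given by an injection
`φ` of its vertices into `V`. -/
def copyEdges (EH : Finset (VH × VH)) (φ : VH ↪ V) : Finset (V × V) :=
  EH.image (fun e => (φ e.1, φ e.2))

/-- The vertex set of the union `D(S)` of a set `S` of copies. -/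
def DSverts (S : Finset (VH ↪ V)) : Finset V :=
  S.biUnion (fun φ => Finset.univ.image φ)

/-- The edge set of the union `D(S)`. -/
def DSedges (EH : Finset (VH × VH)) (S : Finset (VH ↪ V)) : Finset (V × V) :=
  S.biUnion (fun φ => copyEdges EH φ)

/-- The list `l` of distinct vertices describes a directed cycle of the digraph
with edge set `E`. -/
def IsCycleList {V : Type} (E : Finset (V × V)) (l : List V) : Prop :=
  2 ≤ l.length ∧ l.Nodup ∧ l.Chain' (fun a b => (a, b) ∈ E) ∧
    ∀ a b : V, l.head? = some a → l.getLast? = some b → (b, a) ∈ E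

/-- The digraph with edge set `E` has a directed cycle of length `k`. -/
def HasCycle {V : Type} (E : Finset (V × V)) (k : ℕ) : Prop :=
  ∃ l : List V, IsCycleList E l ∧ l.length = k

/-- The edges `(l[i], l[i + 1 mod n])` of the closed walk through `l`. -/
def cycleEdges {α : Type} [DecidableEq α] (l : List α) : Finset (α × α) :=
  (l.zip (l.rotate 1)).toFinset

lemma Relation.TransGen.of_map_of_injective {α β : Type*} {r : α → α → Prop} {f : α → β}
    (hf : Function.Injective f) {a b : α} (h : TransGen (Relation.Map r f f) (f a) (f b)) :
    TransGen r a b := by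
  have : Nonempty α := ⟨a⟩
  have hinv : ∀ x, Function.invFun f (f x) = x := Function.leftInverse_invFun hf
  have hlift : Relation.Map r f f ≤ Function.onFun r (Function.invFun f) := by
    rintro _ _ ⟨x, y, hxy, rfl, rfl⟩
    simpa only [Function.onFun, hinv] using hxy
  simpa only [Function.onFun, hinv] using TransGen.lift _ hlift _ _ h

lemma Finset.card_le_card_of_forall_exists_notMem_biUnion_erase {ι β : Type*} [DecidableEq ι]
    [DecidableEq β] {S : Finset ι} {F : ι → Finset β} {C : Finset β} (hC : C ⊆ S.biUnion F)
    (h : ∀ i ∈ S, ∃ e ∈ C, e ∉ (S.erase i).biUnion F) : S.card ≤ C.card := by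
  choose e heC hprivate using h
  rw [← card_attach]
  refine card_le_card_of_injOn (fun i => e i i.2) (fun i _ => heC i i.2)
    fun ⟨i, hi⟩ _ ⟨j, hj⟩ _ hij => Subtype.ext ?_
  replace hij : e i hi = e j hj := hij
  by_contra hne
  obtain ⟨j', hj', hej'⟩ := mem_biUnion.1 (hC (heC j hj))
  obtain rfl : j' = j := by
    by_contra h'
    exact hprivate j hj (mem_biUnion.2 ⟨j', mem_erase.2 ⟨h', hj'⟩, hej'⟩)
  exact hprivate i hi (mem_biUnion.2 ⟨j', mem_erase.2 ⟨Ne.symm hne, hj⟩, hij ▸ hej'⟩)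

section Cycles

variable {α : Type} {E : Finset (α × α)} {l : List α}

lemma card_cycleEdges_le [DecidableEq α] (l : List α) : (cycleEdges l).card ≤ l.length := by
  simpa [cycleEdges] using (l.zip (l.rotate 1)).toFinset_card_le

lemma isCycleList_iff [DecidableEq α] :
    IsCycleList E l ↔ 2 ≤ l.length ∧ l.Nodup ∧ cycleEdges l ⊆ E := by
  rcases l with _ | ⟨a, t⟩
  · simp [IsCycleList]
  have hclosed : List.IsChain (fun x y => (x, y) ∈ E) (a :: t) ∧
      (∀ x y, (a :: t).head? = some x → (a :: t).getLast? = some y → (y, x) ∈ E) ↔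
      cycleEdges (a :: t) ⊆ E := by
    calc _ ↔ List.IsChain (fun x y => (x, y) ∈ E) (a :: t ++ [a]) := by
          rw [List.isChain_append]; simp [forall_comm (α := α), forall_eq']
      _ ↔ List.Forall₂ (fun x y => (x, y) ∈ E) (a :: t) (t ++ [a]) :=
          List.isChain_cons_append_singleton_iff_forall₂
      _ ↔ _ := by simp [List.forall₂_iff_zip, cycleEdges, Finset.subset_iff]
  exact and_congr_right fun _ => and_congr_right fun _ => hclosed

lemma IsCycleList.cycleEdges_subset [DecidableEq α] (hl : IsCycleList E l) :
    cycleEdges l ⊆ E :=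
  (isCycleList_iff.1 hl).2.2

lemma IsCycleList.of_cycleEdges_subset [DecidableEq α] {E' : Finset (α × α)}
    (hl : IsCycleList E l) (h : cycleEdges l ⊆ E') : IsCycleList E' l :=
  isCycleList_iff.2 ⟨hl.1, hl.2.1, h⟩

lemma IsCycleList.nonempty (hl : IsCycleList E l) : E.Nonempty := by
  obtain ⟨a, t, rfl⟩ := List.exists_cons_of_length_pos (lt_of_lt_of_le two_pos hl.1)
  exact ⟨_, hl.2.2.2 a _ rfl (List.getLast?_eq_some_getLast (List.cons_ne_nil a t))⟩

lemma IsCycleList.transGen_head {a : α} {t : List α} (hl : IsCycleList E (a :: t)) :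
    Relation.TransGen (fun x y => (x, y) ∈ E) a a :=
  .tail' (List.relationReflTransGen_of_exists_isChain_cons t hl.2.2.1 rfl)
    (hl.2.2.2 _ _ rfl (List.getLast?_eq_some_getLast _))

end Cycles

section Copies

variable {α β : Type} [DecidableEq α] (EH : Finset (β × β))

lemma mem_copyEdges {φ : β ↪ α} {x y : α} :
    (x, y) ∈ copyEdges EH φ ↔ Relation.Map (fun a b => (a, b) ∈ EH) φ φ x y := by
  simp [copyEdges, Relation.Map]

lemma not_isCycleList_copyEdges (hEH : ∀ v, ¬ Relation.TransGen (fun a b => (a, b) ∈ EH) v v)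
    (φ : β ↪ α) (l : List α) : ¬ IsCycleList (copyEdges EH φ) l := by
  intro hl
  obtain ⟨x, t, rfl⟩ := List.exists_cons_of_length_pos (lt_of_lt_of_le two_pos hl.1)
  have hx := hl.transGen_head
  obtain ⟨y, hxy, -⟩ := Relation.TransGen.head'_iff.1 hx
  obtain ⟨a, -, -, rfl, -⟩ := (mem_copyEdges EH).1 hxy
  exact hEH a (.of_map_of_injective φ.injective (by simpa only [mem_copyEdges] using hx))

lemma DSedges_singleton (φ : β ↪ α) : DSedges EH {φ} = copyEdges EH φ :=
  Finset.singleton_biUnion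

lemma DSedges_mono {S T : Finset (β ↪ α)} (h : S ⊆ T) : DSedges EH S ⊆ DSedges EH T :=
  Finset.biUnion_subset_biUnion_of_subset_left _ h

lemma one_lt_card_of_isCycleList_DSedges
    (hEH : ∀ v, ¬ Relation.TransGen (fun a b => (a, b) ∈ EH) v v) {S : Finset (β ↪ α)}
    {l : List α} (hl : IsCycleList (DSedges EH S) l) : 1 < S.card := by
  by_contra! hS
  obtain ⟨e, he⟩ := hl.nonempty
  obtain ⟨φ, hφ, -⟩ := Finset.mem_biUnion.1 he
  have hsub : S ⊆ {φ} := fun ψ hψ => Finset.mem_singleton.2 (Finset.card_le_one.1 hS _ hψ _ hφ)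
  refine not_isCycleList_copyEdges EH hEH φ l (hl.of_cycleEdges_subset ?_)
  exact DSedges_singleton EH φ ▸ hl.cycleEdges_subset.trans (DSedges_mono EH hsub)

lemma card_DSedges_le (S : Finset (β ↪ α)) : (DSedges EH S).card ≤ S.card * EH.card :=
  Finset.card_biUnion_le_card_mul _ _ _ fun _ _ => Finset.card_image_le

lemma card_DSverts_le [Fintype β] (S : Finset (β ↪ α)) :
    (DSverts S).card ≤ S.card * Fintype.card β :=
  Finset.card_biUnion_le_card_mul _ _ _ fun _ _ => Finset.card_image_le

end Copies

theorem stmt18 (EH : Finset (VH × VH))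
    (hHacyc : ∀ v, ¬ Relation.TransGen (fun a b => (a, b) ∈ EH) v v)
    (S : Finset (VH ↪ V)) (k : ℕ)
    -- the girth of `D(S)` is `k`
    (hgirth : HasCycle (DSedges EH S) k ∧
      ∀ j : ℕ, j < k → ¬ HasCycle (DSedges EH S) j)
    -- minimality: the union of any proper subset has girth greater than `k`
    (hmin : ∀ T : Finset (VH ↪ V), T ⊂ S →
      ∀ j : ℕ, j ≤ k → ¬ HasCycle (DSedges EH T) j) :
    2 ≤ S.card ∧ S.card ≤ k ∧
      (DSedges EH S).card ≤ k * EH.card ∧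
      (DSverts S).card ≤ k * Fintype.card VH := by
  obtain ⟨⟨l, hl, rfl⟩, -⟩ := hgirth
  have hprivate : ∀ φ ∈ S, ∃ e ∈ cycleEdges l, e ∉ (S.erase φ).biUnion (copyEdges EH) :=
    fun φ hφ => Finset.not_subset.1 fun hsub =>
      hmin _ (Finset.erase_ssubset hφ) _ le_rfl ⟨l, hl.of_cycleEdges_subset hsub, rfl⟩
  have hcard : S.card ≤ l.length :=
    (Finset.card_le_card_of_forall_exists_notMem_biUnion_erase hl.cycleEdges_subset
      hprivate).trans (card_cycleEdges_le l)
  exact ⟨one_lt_card_of_isCycleList_DSedges EH hHacyc hl, hcard,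
    (card_DSedges_le EH S).trans (Nat.mul_le_mul_right _ hcard),
    (card_DSverts_le S).trans (Nat.mul_le_mul_right _ hcard)⟩
end
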